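/- arXiv:1004.3165 — 6 statements merged into one kernel-verified Lean document; each statement's English description precedes it below -/
import Mathlib

section
/- Let n be an even positive integer. Let X be uniform on {0,1}^n, K uniform on [n] independent of X, and M⁰ a random variable on a finite set jointly distributed with (X,K); write M(x; x[1,k]) for the conditional law of M⁰ given (X,K) = (x,k), and set c = I(K : M⁰ | X). Let J be uniform on [n/2] and L uniform on [n]∖[n/2] = {n/2+1, …, n}, with X, J, L mutually independent. Then E_{(x,j,l)←(X,J,L)} h(M(x; x[1,j]), M(x; x[1,l]))² ≤ 8 κ c. -/
/-!
Let `g_x = (1/n) ∑ₖ M(x; k)` be the mixture of the conditional laws. Because `K` is uniform and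
independent of `X`, `I(K : M⁰ | X)` is the average over `(x, k)` of `KL(M(x; k) ‖ g_x)`, measured
in bits. Hellinger distance is `1/√2` times the `ℓ²` distance between square-root vectors, so
`h(M_j, M_l)² ≤ 2 h(M_j, g)² + 2 h(M_l, g)²`, and `2 h(p, q)² ≤ KL(p ‖ q)` in nats, pointwise from
`log t ≤ t - 1` at `t = √(q/p)`. Summing over the disjoint index sets `J` and `L`, each of size
at most `n`, and converting nats to bits through `κ = (ln 2)/2` gives the bound.
-/

open Finset

/-- Hellinger distance between two distributions on a finite set. -/
noncomputable def hell {S : Type*} [Fintype S] (p q : S → ℝ) : ℝ :=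
  Real.sqrt ((1/2) * ∑ s, (Real.sqrt (p s) - Real.sqrt (q s))^2)

/-- ℓ1-distance between two distributions on a finite set. -/
noncomputable def l1 {S : Type*} [Fintype S] (p q : S → ℝ) : ℝ :=
  ∑ s, |p s - q s|

/-- Shannon entropy (base 2) of a distribution on a finite set. -/
noncomputable def ent {S : Type*} [Fintype S] (p : S → ℝ) : ℝ :=
  -∑ s, p s * Real.logb 2 (p s)

/-- Conditional Shannon mutual information `I(A:B|C)` of a joint distribution on
`A × B × C`, via `I(A:B|C) = H(A,C) + H(B,C) - H(A,B,C) - H(C)`. -/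
noncomputable def condMI {A B C : Type*} [Fintype A] [Fintype B] [Fintype C]
    (p : A × B × C → ℝ) : ℝ :=
  ent (fun ac : A × C => ∑ b, p (ac.1, b, ac.2))
    + ent (fun bc : B × C => ∑ a, p (a, bc.1, bc.2))
    - ent p
    - ent (fun c : C => ∑ a, ∑ b, p (a, b, c))

/-- The prefix `x[1,k]` (1-based index `k = k₀+1` for `k₀ : Fin n`), padded with `false`. -/
def prefLe {n : ℕ} (x : Fin n → Bool) (k : Fin n) : Fin n → Bool :=
  fun i => if i ≤ k then x i else false

/-- The strict prefix `x[1,k−1]`, padded with `false`. -/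
def prefLt {n : ℕ} (x : Fin n → Bool) (k : Fin n) : Fin n → Bool :=
  fun i => if i < k then x i else false

/-- The string `x` with its `k`-th bit flipped. -/
def flipAt {n : ℕ} (x : Fin n → Bool) (k : Fin n) : Fin n → Bool :=
  Function.update x k (!(x k))

noncomputable def kl {S : Type*} [Fintype S] (p q : S → ℝ) : ℝ :=
  ∑ s, p s * (Real.log (p s) - Real.log (q s))

noncomputable def mixture {A B : Type*} [Fintype A] (P : A → B → ℝ) : B → ℝ :=
  fun b => (Fintype.card A : ℝ)⁻¹ * ∑ a, P a b

section Hellinger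

variable {S : Type*} [Fintype S]

noncomputable def sqrtVec (p : S → ℝ) : EuclideanSpace ℝ S :=
  WithLp.toLp 2 fun s => √(p s)

lemma hell_eq_dist (p q : S → ℝ) : hell p q = √(1 / 2) * dist (sqrtVec p) (sqrtVec q) := by
  rw [hell, EuclideanSpace.dist_eq, ← Real.sqrt_mul (by norm_num)]
  simp [sqrtVec, Real.dist_eq, sq_abs]

lemma hell_comm (p q : S → ℝ) : hell p q = hell q p := by
  rw [hell_eq_dist, hell_eq_dist, dist_comm]

lemma hell_triangle (p q r : S → ℝ) : hell p r ≤ hell p q + hell q r := by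
  simp only [hell_eq_dist, ← mul_add]
  exact mul_le_mul_of_nonneg_left (dist_triangle _ _ _) (Real.sqrt_nonneg _)

lemma hell_sq_le_two_mul_add_two_mul (p q r : S → ℝ) :
    hell p r ^ 2 ≤ 2 * hell p q ^ 2 + 2 * hell r q ^ 2 := by
  calc hell p r ^ 2 ≤ (hell p q + hell q r) ^ 2 :=
        pow_le_pow_left₀ (Real.sqrt_nonneg _) (hell_triangle p q r) 2
    _ ≤ 2 * (hell p q ^ 2 + hell q r ^ 2) := add_sq_le
    _ = 2 * hell p q ^ 2 + 2 * hell r q ^ 2 := by rw [hell_comm q r]; ring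

lemma two_mul_sub_two_mul_sqrt_le_mul_log_sub {p q : ℝ} (hp : 0 ≤ p) (hq : 0 ≤ q)
    (hpq : q = 0 → p = 0) :
    2 * p - 2 * √(p * q) ≤ p * (Real.log p - Real.log q) := by
  rcases hp.eq_or_lt with rfl | hp
  · simp
  have hq : 0 < q := hq.lt_of_ne fun h => hp.ne' (hpq h.symm)
  have hlog := Real.log_le_sub_one_of_pos (Real.sqrt_pos.2 (div_pos hq hp))
  rw [Real.log_sqrt (div_pos hq hp).le, Real.log_div hq.ne' hp.ne'] at hlog
  have hsqrt : p * √(q / p) = √(p * q) := by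
    rw [← Real.sqrt_sq hp.le, ← Real.sqrt_mul (sq_nonneg p), Real.sqrt_sq hp.le]
    congr 1
    field_simp
  nlinarith [mul_le_mul_of_nonneg_left hlog hp.le]

lemma two_mul_hell_sq_le_kl {p q : S → ℝ} (hp : ∀ s, 0 ≤ p s) (hq : ∀ s, 0 ≤ q s)
    (hp1 : ∑ s, p s = 1) (hq1 : ∑ s, q s = 1) (hpq : ∀ s, q s = 0 → p s = 0) :
    2 * hell p q ^ 2 ≤ kl p q := by
  have hsq : 2 * hell p q ^ 2 = ∑ s, (p s + q s - 2 * √(p s * q s)) := by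
    rw [hell, Real.sq_sqrt (by positivity), ← mul_assoc, mul_one_div_cancel two_ne_zero, one_mul]
    refine Finset.sum_congr rfl fun s _ => ?_
    rw [sub_sq, Real.sq_sqrt (hp s), Real.sq_sqrt (hq s), Real.sqrt_mul (hp s)]
    ring
  calc 2 * hell p q ^ 2 = ∑ s, (2 * p s - 2 * √(p s * q s)) := by
        simp only [hsq, Finset.sum_sub_distrib, Finset.sum_add_distrib, ← Finset.mul_sum, hp1, hq1]
        ring
    _ ≤ kl p q := Finset.sum_le_sum fun s _ =>
        two_mul_sub_two_mul_sqrt_le_mul_log_sub (hp s) (hq s) (hpq s)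

end Hellinger

lemma sum_sum_le_card_mul_sum_of_le_add {ι : Type*} [Fintype ι] {s t : Finset ι}
    (hst : Disjoint s t) {d : ι → ι → ℝ} {H : ι → ℝ} (hH : ∀ k, 0 ≤ H k)
    (hd : ∀ j l, d j l ≤ H j + H l) :
    ∑ j ∈ s, ∑ l ∈ t, d j l ≤ Fintype.card ι * ∑ k, H k := by
  have hs : 0 ≤ ∑ j ∈ s, H j := Finset.sum_nonneg fun j _ => hH j
  have ht : 0 ≤ ∑ l ∈ t, H l := Finset.sum_nonneg fun l _ => hH l
  calc ∑ j ∈ s, ∑ l ∈ t, d j l ≤ ∑ j ∈ s, ∑ l ∈ t, (H j + H l) :=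
        Finset.sum_le_sum fun j _ => Finset.sum_le_sum fun l _ => hd j l
    _ = t.card * ∑ j ∈ s, H j + s.card * ∑ l ∈ t, H l := by
        simp only [Finset.sum_add_distrib, Finset.sum_const, nsmul_eq_mul, Finset.mul_sum]
    _ ≤ Fintype.card ι * ∑ j ∈ s, H j + Fintype.card ι * ∑ l ∈ t, H l := by
        gcongr <;> exact Finset.card_le_univ _
    _ = Fintype.card ι * ∑ k ∈ s.disjUnion t hst, H k := by rw [Finset.sum_disjUnion, mul_add]
    _ ≤ Fintype.card ι * ∑ k, H k := by
        gcongr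
        · exact fun k _ _ => hH k
        · exact Finset.subset_univ _

section Mixture

variable {A B : Type*} [Fintype A] {P : A → B → ℝ}

lemma mixture_nonneg (hP0 : ∀ a b, 0 ≤ P a b) (b : B) : 0 ≤ mixture P b :=
  mul_nonneg (by positivity) (Finset.sum_nonneg fun a _ => hP0 a b)

lemma sum_mixture [Fintype B] [Nonempty A] (hP1 : ∀ a, ∑ b, P a b = 1) :
    ∑ b, mixture P b = 1 := by
  simp only [mixture, ← Finset.mul_sum]
  rw [Finset.sum_comm]
  simp [hP1]

lemma eq_zero_of_mixture_eq_zero (hP0 : ∀ a b, 0 ≤ P a b) {b : B} (hb : mixture P b = 0)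
    (a : A) : P a b = 0 := by
  have hcard : (Fintype.card A : ℝ)⁻¹ ≠ 0 :=
    inv_ne_zero (Nat.cast_ne_zero.2 (Fintype.card_pos_iff.2 ⟨a⟩).ne')
  have hsum := (mul_eq_zero.1 hb).resolve_left hcard
  exact (Finset.sum_eq_zero_iff_of_nonneg fun a _ => hP0 a b).1 hsum a (Finset.mem_univ a)

lemma kl_mixture_div_log_two [Fintype B] (hP0 : ∀ a b, 0 ≤ P a b) (hP1 : ∀ a, ∑ b, P a b = 1)
    (a : A) :
    kl (P a) (mixture P) / Real.log 2
      = ∑ b, P a b * Real.logb 2 (P a b) - ∑ b, P a b * Real.logb 2 (∑ a', P a' b)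
        + Real.logb 2 (Fintype.card A) := by
  have hcard : (Fintype.card A : ℝ) ≠ 0 := Nat.cast_ne_zero.2 (Fintype.card_pos_iff.2 ⟨a⟩).ne'
  have hterm : ∀ b, P a b * (Real.log (P a b) - Real.log (mixture P b)) / Real.log 2
      = P a b * Real.logb 2 (P a b) - P a b * Real.logb 2 (∑ a', P a' b)
        + P a b * Real.logb 2 (Fintype.card A) := by
    intro b
    rcases (hP0 a b).eq_or_lt with h | h
    · simp [← h]
    have hsum : ∑ a', P a' b ≠ 0 :=
      (h.trans_le (Finset.single_le_sum (fun a' _ => hP0 a' b) (Finset.mem_univ a))).ne'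
    rw [mixture, Real.log_mul (inv_ne_zero hcard) hsum, Real.log_inv]
    simp only [Real.logb]
    ring
  rw [kl, Finset.sum_div, Finset.sum_congr rfl fun b _ => hterm b, Finset.sum_add_distrib,
    Finset.sum_sub_distrib, ← Finset.sum_mul, hP1, one_mul]

lemma sum_sum_hell_sq_le_card_mul_sum_kl_mixture [Fintype B] (hP0 : ∀ a b, 0 ≤ P a b)
    (hP1 : ∀ a, ∑ b, P a b = 1) {s t : Finset A} (hst : Disjoint s t) :
    ∑ j ∈ s, ∑ l ∈ t, hell (P j) (P l) ^ 2 ≤ Fintype.card A * ∑ k, kl (P k) (mixture P) := by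
  have hkl : ∀ k, 2 * hell (P k) (mixture P) ^ 2 ≤ kl (P k) (mixture P) := fun k =>
    have : Nonempty A := ⟨k⟩
    two_mul_hell_sq_le_kl (hP0 k) (mixture_nonneg hP0) (hP1 k) (sum_mixture hP1)
      fun _ hb => eq_zero_of_mixture_eq_zero hP0 hb k
  calc ∑ j ∈ s, ∑ l ∈ t, hell (P j) (P l) ^ 2
      ≤ Fintype.card A * ∑ k, 2 * hell (P k) (mixture P) ^ 2 :=
        sum_sum_le_card_mul_sum_of_le_add hst (fun k => by positivity)
          fun j l => hell_sq_le_two_mul_add_two_mul (P j) (mixture P) (P l)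
    _ ≤ Fintype.card A * ∑ k, kl (P k) (mixture P) := by
        gcongr with k
        exact hkl k

end Mixture

section Entropy

lemma ent_const_mul {S : Type*} [Fintype S] (w : ℝ) (p : S → ℝ) :
    ent (fun s => w * p s) = w * ent p - w * (∑ s, p s) * Real.logb 2 w := by
  rcases eq_or_ne w 0 with rfl | hw
  · simp [ent]
  have hterm : ∀ s, w * p s * Real.logb 2 (w * p s)
      = w * (p s * Real.logb 2 (p s)) + w * p s * Real.logb 2 w := by
    intro s
    rcases eq_or_ne (p s) 0 with hs | hs
    · simp [hs]
    · rw [Real.logb_mul hw hs]; ring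
  simp only [ent, hterm, Finset.sum_add_distrib, ← Finset.mul_sum, ← Finset.sum_mul]
  ring

variable {A B C : Type*} [Fintype A] [Fintype B] [Fintype C]

lemma condMI_const_mul (w : ℝ) (p : A × B × C → ℝ) :
    condMI (fun q => w * p q) = w * condMI p := by
  have hAC : ∑ ac : A × C, ∑ b, p (ac.1, b, ac.2) = ∑ q, p q := by
    simp only [Fintype.sum_prod_type]
    exact Finset.sum_congr rfl fun _ _ => Finset.sum_comm
  have hBC : ∑ bc : B × C, ∑ a, p (a, bc.1, bc.2) = ∑ q, p q := by
    simp only [Fintype.sum_prod_type]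
    exact (Finset.sum_congr rfl fun _ _ => Finset.sum_comm).trans Finset.sum_comm
  have hC : ∑ c, ∑ a, ∑ b, p (a, b, c) = ∑ q, p q := by
    simp only [Fintype.sum_prod_type]
    exact Finset.sum_comm.trans (Finset.sum_congr rfl fun _ _ => Finset.sum_comm)
  -- the four marginals have the same total mass, so the `log w` terms cancel
  simp only [condMI, ← Finset.mul_sum, ent_const_mul, hAC, hBC, hC]
  ring

lemma condMI_eq_sum_kl_mixture {W : C → A → B → ℝ} (hW0 : ∀ c a b, 0 ≤ W c a b)
    (hW1 : ∀ c a, ∑ b, W c a b = 1) :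
    condMI (fun q : A × B × C => W q.2.2 q.1 q.2.1)
      = (∑ c, ∑ a, kl (W c a) (mixture (W c))) / Real.log 2 := by
  simp only [Finset.sum_div, kl_mixture_div_log_two (hW0 _) (hW1 _), Finset.sum_add_distrib,
    Finset.sum_sub_distrib]
  have hG : ∀ c, ∑ a, ∑ b, W c a b * Real.logb 2 (∑ a', W c a' b)
      = ∑ b, (∑ a, W c a b) * Real.logb 2 (∑ a, W c a b) := fun c => by
    rw [Finset.sum_comm]; simp only [Finset.sum_mul]
  simp only [condMI, ent, Fintype.sum_prod_type, hW1, Real.logb_one, mul_zero,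
    Finset.sum_const_zero, hG]
  have hBC : ∀ f : C → B → ℝ, ∑ b, ∑ c, f c b = ∑ c, ∑ b, f c b := fun _ => Finset.sum_comm
  have hABC : ∀ f : C → A → B → ℝ, ∑ a, ∑ b, ∑ c, f c a b = ∑ c, ∑ a, ∑ b, f c a b := fun _ =>
    (Finset.sum_congr rfl fun _ _ => Finset.sum_comm).trans Finset.sum_comm
  rw [hBC, hABC]
  simp only [Finset.sum_const, Finset.card_univ, nsmul_eq_mul, mul_one]
  ring

end Entropy

/-- `j, l : Fin n` are 0-based: `(j : ℕ) < n / 2` encodes `J ∈ [n/2]` and `n / 2 ≤ (l : ℕ)`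
encodes `L ∈ [n] ∖ [n/2]`; `Mc x k` is the law of `M⁰` given `(X, K) = (x, k)`. -/
theorem index_change_perturbation_general
    {n : ℕ} (hpos : 0 < n) {T : Type*} [Fintype T]
    (Mc : (Fin n → Bool) → Fin n → T → ℝ)
    (hnn : ∀ x k m, 0 ≤ Mc x k m)
    (hsum : ∀ x k, ∑ m, Mc x k m = 1) :
    (1 / 2 ^ n) * (2 / (n : ℝ)) ^ 2 *
        ∑ x : Fin n → Bool,
          ∑ j ∈ Finset.univ.filter (fun j : Fin n => (j : ℕ) < n / 2),
            ∑ l ∈ Finset.univ.filter (fun l : Fin n => n / 2 ≤ (l : ℕ)),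
              hell (Mc x j) (Mc x l) ^ 2
      ≤ 8 * (Real.log 2 / 2) *
          condMI (fun q : Fin n × T × (Fin n → Bool) =>
            (1 / 2 ^ n) * (1 / (n : ℝ)) * Mc q.2.2 q.1 q.2.1) := by
  have hhalves : Disjoint (Finset.univ.filter fun j : Fin n => (j : ℕ) < n / 2)
      (Finset.univ.filter fun l : Fin n => n / 2 ≤ (l : ℕ)) :=
    Finset.disjoint_filter.2 fun _ _ hj hl => (not_le.2 hj) hl
  have hrow := fun x => sum_sum_hell_sq_le_card_mul_sum_kl_mixture (hnn x) (hsum x) hhalves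
  simp only [Fintype.card_fin] at hrow
  rw [condMI_const_mul, condMI_eq_sum_kl_mixture hnn hsum]
  have hn : (n : ℝ) ≠ 0 := Nat.cast_ne_zero.2 hpos.ne'
  calc _ ≤ (1 / 2 ^ n) * (2 / (n : ℝ)) ^ 2 *
        ∑ x : Fin n → Bool, n * ∑ k, kl (Mc x k) (mixture (Mc x)) := by
        gcongr with x
        exact hrow x
    _ = _ := by
        rw [← Finset.mul_sum]
        field_simp
        ring

/-- Lemma `thm-pairs`: with `X` uniform on `{0,1}^n`, `K` uniform on `[n]`
independent of `X`, and `M⁰` having conditional law `Mc x k` given `(X,K) = (x,k)`,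
set `c = I(K : M⁰ | X)`.  For `J` uniform on `[n/2]` and `L` uniform on `[n]∖[n/2]`
(here `j, l : Fin n` are 0-based, i.e. `(j:ℕ) < n/2` and `n/2 ≤ (l:ℕ)`),
`E_{(x,j,l)} h(M(x; x[1,j]), M(x; x[1,l]))² ≤ 8κc` with `κ = (ln 2)/2`. -/
theorem index_change_perturbation
    {n : ℕ} (hn : Even n) (hpos : 0 < n) {T : Type*} [Fintype T]
    (Mc : (Fin n → Bool) → Fin n → T → ℝ)
    (hnn : ∀ x k m, 0 ≤ Mc x k m)
    (hsum : ∀ x k, ∑ m, Mc x k m = 1) :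
    (1 / 2 ^ n) * (2 / (n : ℝ)) ^ 2 *
        ∑ x : Fin n → Bool,
          ∑ j ∈ Finset.univ.filter (fun j : Fin n => (j : ℕ) < n / 2),
            ∑ l ∈ Finset.univ.filter (fun l : Fin n => n / 2 ≤ (l : ℕ)),
              hell (Mc x j) (Mc x l) ^ 2
      ≤ 8 * (Real.log 2 / 2) *
          condMI (fun q : Fin n × T × (Fin n → Bool) =>
            (1 / 2 ^ n) * (1 / (n : ℝ)) * Mc q.2.2 q.1 q.2.1) :=
  index_change_perturbation_general hpos Mc hnn hsum
end

section
/- Let (X, K, M) be jointly distributed random variables taking values in finite sets. For (x,k) in the support of (X,K), let M|x,k denote the conditional distribution of M given (X,K) = (x,k), and let M|x denote the conditional distribution of M given X = x. Then E_{(x,k)←(X,K)} h(M|x,k , M|x)² ≤ κ · I(K : M | X). -/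
open Finset

/-! For fixed `x` and `k`, write `P = M|x,k` and `Q = M|x`. Summing the pointwise bound
`√(P m Q m) ≥ P m (1 + ½ ln (Q m / P m))` (that is, `ln y ≤ y - 1` at `y = √(Q m / P m)`) over `m`
gives `h(P, Q)² ≤ ½ D(P ‖ Q)` with the divergence in nats; `P ≪ Q` because `p(x,k,m) ≤ p(x,m)`.
Averaging `D(M|x,k ‖ M|x)` over `(x, k)` is `I(K : M | X)` in nats, i.e. `ln 2` times the value
in bits. -/

lemma add_half_mul_log_sub_le_sqrt_mul_sqrt {P Q : ℝ} (hP : 0 ≤ P) (hQ : 0 ≤ Q)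
    (hPQ : 0 < P → 0 < Q) :
    P + P / 2 * (Real.log Q - Real.log P) ≤ √P * √Q := by
  rcases hP.eq_or_lt with rfl | hP
  · simp
  have hQ' := hPQ hP
  have hsP : 0 < √P := Real.sqrt_pos.2 hP
  have hlog := Real.log_le_sub_one_of_pos (div_pos (Real.sqrt_pos.2 hQ') hsP)
  rw [Real.log_div (by positivity) hsP.ne', Real.log_sqrt hQ, Real.log_sqrt hP.le] at hlog
  have hPr : P * (√Q / √P) = √P * √Q := by
    nth_rw 1 [← Real.mul_self_sqrt hP.le]
    field_simp
  nlinarith [mul_le_mul_of_nonneg_left hlog hP.le]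

section Hellinger

variable {S : Type*} [Fintype S]

lemma hell_sq_eq_one_sub_sum_sqrt_mul {P Q : S → ℝ} (hP : ∀ s, 0 ≤ P s) (hQ : ∀ s, 0 ≤ Q s)
    (hP1 : ∑ s, P s = 1) (hQ1 : ∑ s, Q s = 1) :
    hell P Q ^ 2 = 1 - ∑ s, √(P s) * √(Q s) := by
  have hexp : ∀ s, (√(P s) - √(Q s)) ^ 2 = P s + Q s - 2 * (√(P s) * √(Q s)) := fun s => by
    rw [sub_sq, Real.sq_sqrt (hP s), Real.sq_sqrt (hQ s)]; ring
  rw [hell, Real.sq_sqrt (by positivity)]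
  simp only [hexp, sum_sub_distrib, sum_add_distrib, ← mul_sum, hP1, hQ1]
  ring

lemma hell_sq_le_half_sum_mul_log_sub {P Q : S → ℝ} (hP : ∀ s, 0 ≤ P s) (hQ : ∀ s, 0 ≤ Q s)
    (hP1 : ∑ s, P s = 1) (hQ1 : ∑ s, Q s = 1) (hPQ : ∀ s, 0 < P s → 0 < Q s) :
    hell P Q ^ 2 ≤ 1 / 2 * ∑ s, P s * (Real.log (P s) - Real.log (Q s)) := by
  have key := sum_le_sum fun s (_ : s ∈ univ) =>
    add_half_mul_log_sub_le_sqrt_mul_sqrt (hP s) (hQ s) (hPQ s)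
  rw [hell_sq_eq_one_sub_sum_sqrt_mul hP hQ hP1 hQ1]
  simp only [sum_add_distrib, hP1] at key
  have hsum : ∑ s, P s / 2 * (Real.log (Q s) - Real.log (P s))
      = -(1 / 2 * ∑ s, P s * (Real.log (P s) - Real.log (Q s))) := by
    rw [mul_sum, ← sum_neg_distrib]; exact sum_congr rfl fun s _ => by ring
  linarith

lemma sum_mul_hell_sq_normalize_le {a t : S → ℝ} (ha : ∀ s, 0 ≤ a s) (ht : ∀ s, 0 ≤ t s)
    (hat : ∀ s, 0 < a s → 0 < t s) :
    (∑ s, a s) * hell (fun s => a s / ∑ s', a s') (fun s => t s / ∑ s', t s') ^ 2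
      ≤ 1 / 2 * ∑ s, a s * (Real.log (a s) - Real.log (∑ s', a s')
          - (Real.log (t s) - Real.log (∑ s', t s'))) := by
  rcases (sum_nonneg fun s (_ : s ∈ univ) => ha s).eq_or_lt with hzero | hapos
  · have ha0 := (sum_eq_zero_iff_of_nonneg fun s (_ : s ∈ univ) => ha s).1 hzero.symm
    simp [ha0]
  obtain ⟨s₀, -, hs₀⟩ := exists_lt_of_sum_lt (f := fun _ => (0 : ℝ)) (by simpa using hapos)
  have htpos : 0 < ∑ s', t s' := sum_pos' (fun s _ => ht s) ⟨s₀, mem_univ _, hat s₀ hs₀⟩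
  have hnormalized := hell_sq_le_half_sum_mul_log_sub (P := fun s => a s / ∑ s', a s')
    (Q := fun s => t s / ∑ s', t s') (fun s => div_nonneg (ha s) hapos.le)
    (fun s => div_nonneg (ht s) htpos.le) (by rw [← sum_div, div_self hapos.ne'])
    (by rw [← sum_div, div_self htpos.ne'])
    (fun s h => div_pos (hat s ((div_pos_iff_of_pos_right hapos).1 h)) htpos)
  calc (∑ s, a s) * hell (fun s => a s / ∑ s', a s') (fun s => t s / ∑ s', t s') ^ 2
      ≤ (∑ s, a s) * (1 / 2 * ∑ s, a s / (∑ s', a s')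
          * (Real.log (a s / ∑ s', a s') - Real.log (t s / ∑ s', t s'))) :=
        mul_le_mul_of_nonneg_left hnormalized hapos.le
    _ = _ := by
      rw [mul_left_comm, mul_sum]
      congr 1
      refine sum_congr rfl fun s _ => ?_
      rcases (ha s).eq_or_lt with has | has
      · simp [← has]
      rw [Real.log_div has.ne' hapos.ne', Real.log_div (hat s has).ne' htpos.ne']
      field_simp

end Hellinger

lemma condMI_eq_sum {A B C : Type*} [Fintype A] [Fintype B] [Fintype C] (p : A × B × C → ℝ) :
    condMI p = ∑ c, ∑ a, ∑ b, p (a, b, c) * (Real.logb 2 (p (a, b, c))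
      - Real.logb 2 (∑ b', p (a, b', c))
      - (Real.logb 2 (∑ a', p (a', b, c)) - Real.logb 2 (∑ a', ∑ b', p (a', b', c)))) := by
  simp only [condMI, ent, Fintype.sum_prod_type, sum_mul, mul_sub, sum_sub_distrib]
  rw [sum_comm (s := univ (α := A)) (t := univ (α := C))]
  conv_lhs =>
    enter [1, 1, 2, 1]
    rw [sum_comm]
    enter [2, c]
    rw [sum_comm]
  conv_lhs =>
    enter [1, 2, 1, 2, a]
    rw [sum_comm]
  conv_lhs =>
    enter [1, 2, 1]
    rw [sum_comm]
  ring

theorem conditional_average_encoding_general {X K M : Type*} [Fintype X] [Fintype K] [Fintype M]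
    (p : X × K × M → ℝ) (hnn : ∀ q, 0 ≤ p q) :
    ∑ x, ∑ k, (∑ m, p (x, k, m)) *
        hell (fun m => p (x, k, m) / ∑ m', p (x, k, m'))
             (fun m => (∑ k', p (x, k', m)) / ∑ k', ∑ m', p (x, k', m')) ^ 2
      ≤ (Real.log 2 / 2) * condMI (fun q : K × M × X => p (q.2.2, q.1, q.2.1)) := by
  rw [condMI_eq_sum, mul_sum]
  refine sum_le_sum fun x _ => ?_
  rw [mul_sum]
  refine sum_le_sum fun k _ => ?_
  have hblock := sum_mul_hell_sq_normalize_le (a := fun m => p (x, k, m))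
    (t := fun m => ∑ k', p (x, k', m)) (fun m => hnn _)
    (fun m => sum_nonneg fun k' _ => hnn _)
    (fun m h => h.trans_le <|
      single_le_sum (f := fun k' => p (x, k', m)) (fun k' _ => hnn _) (mem_univ k))
  rw [sum_comm] at hblock
  refine hblock.trans_eq ?_
  rw [mul_sum, mul_sum]
  refine sum_congr rfl fun m _ => ?_
  simp only [← Real.log_div_log]
  field_simp

/-- conditional average encoding: for jointly distributed finite
random variables `(X,K,M)` with joint pmf `p`,
`E_{(x,k)←(X,K)} h(M|x,k , M|x)² ≤ κ · I(K:M|X)` with `κ = (ln 2)/2`. -/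
theorem conditional_average_encoding {X K M : Type*} [Fintype X] [Fintype K] [Fintype M]
    (p : X × K × M → ℝ) (hnn : ∀ q, 0 ≤ p q) (hsum : ∑ q, p q = 1) :
    ∑ x, ∑ k, (∑ m, p (x, k, m)) *
        hell (fun m => p (x, k, m) / ∑ m', p (x, k, m'))
             (fun m => (∑ k', p (x, k', m)) / ∑ k', ∑ m', p (x, k', m')) ^ 2
      ≤ (Real.log 2 / 2) * condMI (fun q : K × M × X => p (q.2.2, q.1, q.2.1)) :=
  conditional_average_encoding_general p hnn
end

section
/- Let n be an even positive integer. Let X be uniform on {0,1}^n, K uniform on [n] independent of X, and M⁰ a random variable on a finite set jointly distributed with (X,K); write M(x; x[1,j]) for the conditional law of M⁰ given (X,K) = (x,j). Suppose I(X : M⁰ | K, X[1,K]) ≤ d₁·n. Let J be uniform on [n/2] and L uniform on {n/2+1, …, n}, with X, J, L mutually independent. For l ∈ {n/2+1,…,n}, a prefix z ∈ {0,1}^l and j ∈ [n/2], let M(z·X[l+1,n]; z[1,j]) denote the mixture, over a uniformly random suffix s ∈ {0,1}^{n−l}, of the distributions M(z·s; z[1,j]). Then E_{(z,j,l)←(X[1,L],J,L)}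 h( M(z·X[l+1,n]; z[1,j]) , M(z[1,l−1]·z̄_l·X[l+1,n]; z[1,j]) )² ≤ 16 κ d₁, where z[1,l−1]·z̄_l is z with its l-th bit flipped. -/
open Finset

/-- `M(z·X[l+1,n]; z[1,k])`: the mixture, over a uniformly random suffix, of the
conditional laws `Mc y k` over Alice's strings `y` agreeing with `z` on the (1-based)
positions `1,…,l+1`, with Bob's index `k`. -/
noncomputable def mixC {n : ℕ} {T : Type*} [Fintype T]
    (Mc : (Fin n → Bool) → Fin n → T → ℝ)
    (z : Fin n → Bool) (l k : Fin n) : T → ℝ :=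
  fun m => (∑ y, if ∀ i, i ≤ l → y i = z i then Mc y k m else 0)
    / 2 ^ (n - ((l : ℕ) + 1))

/-!
Write `Hₖ(l)` for the average over `x` of the entropy of `mixC Mc x l k`, the law of `M⁰` given
`K = k` and the first `l + 1` bits of `X`. For `l ⋖ l'` the distribution `mixC x l k` is the
midpoint of `mixC x l' k` and `mixC (flipAt x l') l' k`, and the squared Hellinger distance is at
most `2 ln 2` times the Jensen–Shannon divergence (in bits), so the average squared Hellinger
distance of a flip at `l'` is at most `2 ln 2 (Hₖ(l) - Hₖ(l'))`. Summing over `l > k` telescopes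
to `2 ln 2 (Hₖ(k) - Hₖ(n-1))`, whose average over `k` is `2 ln 2 · I(X : M⁰ | K, X[1,K])`, at most
`2 ln 2 · d₁ n`. Keeping only `j < n/2 ≤ l` and normalizing gives `(2/n)² · 2 ln 2 · d₁ n² = 16κd₁`.
-/

open Real

lemma two_mul_sub_two_mul_sqrt_le_mul_log_sub_s4 {p m : ℝ} (hp : 0 ≤ p) (hm : 0 < m) :
    2 * p - 2 * √(p * m) ≤ p * (log p - log m) := by
  rcases hp.eq_or_lt with rfl | hp
  · simp
  have hsp := sqrt_pos.2 hp
  have key := one_sub_inv_le_log_of_pos (div_pos hsp (sqrt_pos.2 hm))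
  rw [log_div hsp.ne' (sqrt_pos.2 hm).ne', log_sqrt hp.le, log_sqrt hm.le, inv_div] at key
  have hpm : p * (√m / √p) = √(p * m) := by
    rw [sqrt_mul hp.le, mul_div_assoc', div_eq_iff hsp.ne']
    linear_combination √m * (mul_self_sqrt hp.le).symm
  nlinarith [mul_le_mul_of_nonneg_left key hp.le]

lemma sq_sqrt_sub_sqrt_le_negMulLog {p q : ℝ} (hp : 0 ≤ p) (hq : 0 ≤ q) :
    (√p - √q) ^ 2 / 2 ≤ 2 * negMulLog ((p + q) / 2) - negMulLog p - negMulLog q := by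
  rcases (add_nonneg hp hq).eq_or_lt with hpq | hpq
  · obtain ⟨rfl, rfl⟩ : p = 0 ∧ q = 0 := ⟨by linarith, by linarith⟩
    simp
  set m := (p + q) / 2 with hm_def
  have hm : 0 < m := by positivity
  have hp' := two_mul_sub_two_mul_sqrt_le_mul_log_sub_s4 hp hm
  have hq' := two_mul_sub_two_mul_sqrt_le_mul_log_sub_s4 hq hm
  have hlog : p * (log p - log m) + q * (log q - log m)
      = 2 * negMulLog m - negMulLog p - negMulLog q := by
    simp only [negMulLog, m]; ring
  rw [← hlog]
  rw [sqrt_mul hp] at hp'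
  rw [sqrt_mul hq] at hq'
  -- `(√p - √q)² / 2 ≤ (√p - √m)² + (√q - √m)²`, which is the sum of the two left sides
  nlinarith [sq_nonneg (√p + √q - 2 * √m), sq_sqrt hp, sq_sqrt hq, sq_sqrt hm.le]

section Entropy

variable {S A B C : Type*} [Fintype S] [Fintype A] [Fintype B] [Fintype C]

lemma ent_eq_sum_negMulLog (p : S → ℝ) : ent p = (∑ s, negMulLog (p s)) / log 2 := by
  simp only [ent, negMulLog, logb, neg_mul, Finset.sum_neg_distrib, neg_div, Finset.sum_div,
    mul_div_assoc]

lemma ent_comp_equiv (e : S ≃ A) (p : A → ℝ) : ent (fun s => p (e s)) = ent p := by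
  simp only [ent, e.sum_comp (fun a => p a * logb 2 (p a))]

lemma ent_mul_cond (w : C → ℝ) (q : C → A → ℝ) (hq : ∀ c, ∑ a, q c a = 1) :
    ent (fun ac : A × C => w ac.2 * q ac.2 ac.1) = ent w + ∑ c, w c * ent (q c) := by
  simp only [ent_eq_sum_negMulLog, Fintype.sum_prod_type_right, negMulLog_mul,
    Finset.sum_add_distrib, ← Finset.sum_mul, ← Finset.mul_sum, hq, one_mul]
  simp only [add_div, Finset.sum_div, mul_div_assoc]

lemma hell_sq_le_jensenShannon {p q : S → ℝ} (hp : ∀ s, 0 ≤ p s) (hq : ∀ s, 0 ≤ q s) :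
    hell p q ^ 2 ≤ 2 * log 2 * (ent (fun s => (p s + q s) / 2) - (ent p + ent q) / 2) := by
  have hlog : 0 < log 2 := log_pos one_lt_two
  rw [hell, sq_sqrt (by positivity), ent_eq_sum_negMulLog, ent_eq_sum_negMulLog,
    ent_eq_sum_negMulLog]
  calc 1 / 2 * ∑ s, (√(p s) - √(q s)) ^ 2
      ≤ ∑ s, (2 * negMulLog ((p s + q s) / 2) - negMulLog (p s) - negMulLog (q s)) := by
        rw [Finset.mul_sum]
        gcongr with s
        linarith [sq_sqrt_sub_sqrt_le_negMulLog (hp s) (hq s)]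
    _ = _ := by
        simp only [Finset.sum_sub_distrib, ← Finset.mul_sum]
        field_simp
        ring

/-- `I(A:B|C) = H(B|C) - H(B|A,C)` when `B` is drawn from the channel `Q` given `(A, C)`, and `μ c`
is the law of `B` given `C = c`. -/
lemma condMI_eq_of_channel (r : A × C → ℝ) (Q : A × C → B → ℝ) (μ : C → B → ℝ)
    (hQ : ∀ ac, ∑ b, Q ac b = 1) (hμ : ∀ c, ∑ b, μ c b = 1)
    (hmix : ∀ b c, ∑ a, r (a, c) * Q (a, c) b = (∑ a, r (a, c)) * μ c b) :
    condMI (fun abc : A × B × C => r (abc.1, abc.2.2) * Q (abc.1, abc.2.2) abc.2.1)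
      = ∑ c, (∑ a, r (a, c)) * ent (μ c) - ∑ ac, r ac * ent (Q ac) := by
  let e : B × (A × C) ≃ A × B × C :=
    { toFun := fun x => (x.2.1, x.1, x.2.2)
      invFun := fun y => (y.2.1, y.1, y.2.2)
      left_inv := fun _ => rfl
      right_inv := fun _ => rfl }
  have hABC := ent_comp_equiv e
    (fun abc : A × B × C => r (abc.1, abc.2.2) * Q (abc.1, abc.2.2) abc.2.1)
  simp only [e, Equiv.coe_fn_mk, Prod.mk.eta, ent_mul_cond r Q hQ] at hABC
  have hAC : (fun ac : A × C => ∑ b, r (ac.1, ac.2) * Q (ac.1, ac.2) b) = r := by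
    ext ac; rw [← Finset.mul_sum, Prod.mk.eta, hQ, mul_one]
  have hC : (fun c => ∑ a, ∑ b, r (a, c) * Q (a, c) b) = fun c => ∑ a, r (a, c) := by
    ext c; simp only [← Finset.mul_sum, hQ, mul_one]
  rw [condMI]
  simp only [hmix]
  rw [hAC, hC, ← hABC, ent_mul_cond (fun c => ∑ a, r (a, c)) μ hμ]
  ring

end Entropy

lemma Finset.sum_Ioc_le_sub_of_covBy {α M : Type*} [LinearOrder α] [LocallyFiniteOrder α]
    [SuccOrder α] [IsSuccArchimedean α] [AddCommGroup M] [PartialOrder M] [IsOrderedAddMonoid M]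
    {f g : α → M} (h : ∀ i j, i ⋖ j → g j ≤ f i - f j) {a b : α} (hab : a ≤ b) :
    ∑ l ∈ Ioc a b, g l ≤ f a - f b := by
  induction hab using Succ.rec with
  | rfl => simp
  | succ b hab ih =>
    by_cases hb : IsMax b
    · rwa [hb.succ_eq]
    have hcov := Order.covBy_succ_of_not_isMax hb
    rw [← insert_Ioc_right_eq_Ioc_succ_of_not_isMax hab hb,
      sum_insert fun hmem => (mem_Ioc.1 hmem).2.not_gt hcov.lt]
    calc g (Order.succ b) + ∑ l ∈ Ioc a b, g l
        ≤ (f b - f (Order.succ b)) + (f a - f b) := add_le_add (h _ _ hcov) ih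
      _ = f a - f (Order.succ b) := by abel

section Prefix

variable {n : ℕ}

lemma card_agree (z : Fin n → Bool) (l : Fin n) :
    #{y : Fin n → Bool | ∀ i, i ≤ l → y i = z i} = 2 ^ (n - ((l : ℕ) + 1)) := by
  have : ({y : Fin n → Bool | ∀ i, i ≤ l → y i = z i} : Finset _)
      = Fintype.piFinset fun i => if i ≤ l then {z i} else univ := by
    ext y
    simp only [mem_filter, mem_univ, true_and, Fintype.mem_piFinset]
    refine forall_congr' fun i => ?_
    split_ifs <;> simp [*]
  simp only [this, Fintype.card_piFinset, apply_ite, card_singleton, card_univ,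
    Fintype.card_bool, prod_ite, prod_const_one, one_mul, prod_const, not_le]
  rw [filter_lt_eq_Ioi, Fin.card_Ioi, Nat.sub_sub, Nat.add_comm 1]

lemma flipAt_flipAt (x : Fin n → Bool) (l : Fin n) : flipAt (flipAt x l) l = x := by
  simp [flipAt]

lemma prefLe_eq_prefLe_iff {x y : Fin n → Bool} {k : Fin n} :
    prefLe x k = prefLe y k ↔ ∀ i, i ≤ k → x i = y i := by
  simp only [funext_iff, prefLe]
  exact forall_congr' fun i => by by_cases hi : i ≤ k <;> simp [hi]

lemma prefLe_prefLe (x : Fin n → Bool) (k : Fin n) : prefLe (prefLe x k) k = prefLe x k :=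
  prefLe_eq_prefLe_iff.2 fun _ hi => if_pos hi

end Prefix

section Mixture

variable {n : ℕ} {T : Type*} [Fintype T] (Mc : (Fin n → Bool) → Fin n → T → ℝ)

lemma mixC_nonneg (hnn : ∀ x k m, 0 ≤ Mc x k m) (z : Fin n → Bool) (l k : Fin n) (m : T) :
    0 ≤ mixC Mc z l k m :=
  div_nonneg (sum_nonneg fun y _ => by split_ifs <;> simp [hnn]) (by positivity)

lemma sum_mixC (hsum : ∀ x k, ∑ m, Mc x k m = 1) (z : Fin n → Bool) (l k : Fin n) :
    ∑ m, mixC Mc z l k m = 1 := by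
  simp only [mixC, ← sum_div]
  rw [sum_comm]
  simp only [← ite_sum_zero, hsum, sum_boole, card_agree, Nat.cast_pow, Nat.cast_ofNat]
  exact div_self (by positivity)

lemma mixC_congr {z z' : Fin n → Bool} {l : Fin n} (h : ∀ i, i ≤ l → z i = z' i) (k : Fin n) :
    mixC Mc z l k = mixC Mc z' l k := by
  ext m
  simp only [mixC]
  congr 1
  refine sum_congr rfl fun y _ => if_congr ?_ rfl rfl
  exact forall₂_congr fun i hi => by rw [h i hi]

lemma mixC_of_val_add_one_eq {l : Fin n} (hl : (l : ℕ) + 1 = n) (z : Fin n → Bool) (k : Fin n) :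
    mixC Mc z l k = Mc z k := by
  have hall : ∀ i : Fin n, i ≤ l := fun i => Fin.le_def.2 (by omega)
  ext m
  simp [mixC, hall, ← funext_iff, hl]

lemma mixC_eq_avg_of_covBy {l l' : Fin n} (h : l ⋖ l') (z : Fin n → Bool) (k : Fin n) (m : T) :
    mixC Mc z l k m = (mixC Mc z l' k m + mixC Mc (flipAt z l') l' k m) / 2 := by
  have hlt : ∀ i, i < l' ↔ i ≤ l := fun i => ⟨h.le_of_lt, fun hi => hi.trans_lt h.lt⟩
  have hagree : ∀ y w : Fin n → Bool,
      (∀ i, i ≤ l' → y i = w i) ↔ (∀ i, i ≤ l → y i = w i) ∧ y l' = w l' := fun y w => by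
    simp only [le_iff_lt_or_eq, hlt, or_imp, forall_and, forall_eq]
  have hflip : ∀ y : Fin n → Bool,
      (∀ i, i ≤ l → y i = flipAt z l' i) ↔ ∀ i, i ≤ l → y i = z i := fun y =>
    forall₂_congr fun i hi => by rw [flipAt, Function.update_of_ne (hi.trans_lt h.lt).ne]
  have hsplit : ∀ y : Fin n → Bool,
      (if ∀ i, i ≤ l → y i = z i then Mc y k m else 0)
        = (if ∀ i, i ≤ l' → y i = z i then Mc y k m else 0)
          + (if ∀ i, i ≤ l' → y i = flipAt z l' i then Mc y k m else 0) := fun y => by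
    simp only [hagree, hflip]
    simp only [flipAt, Function.update_self]
    by_cases hA : ∀ i, i ≤ l → y i = z i <;> cases y l' <;> cases z l' <;> simp [hA]
  have hexp : n - ((l : ℕ) + 1) = n - ((l' : ℕ) + 1) + 1 := by
    have := Nat.covBy_iff_add_one_eq.1 (Fin.covBy_iff.1 h)
    omega
  simp only [mixC, hsplit, sum_add_distrib, hexp, pow_succ]
  ring

lemma mixC_prefLe (x : Fin n → Bool) (k : Fin n) : mixC Mc (prefLe x k) k k = mixC Mc x k k :=
  mixC_congr Mc (fun _ hi => if_pos hi) k

/-- Given `prefLe X k = z`, the law of `M⁰` is the mixture `mixC Mc z k k`. -/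
lemma sum_ite_prefLe_mul (c : ℝ) (k : Fin n) (z : Fin n → Bool) (m : T) :
    ∑ x, (if z = prefLe x k then c else 0) * Mc x k m
      = (∑ x, if z = prefLe x k then c else 0) * mixC Mc z k k m := by
  by_cases hz : prefLe z k = z
  · have hiff : ∀ x, z = prefLe x k ↔ ∀ i, i ≤ k → x i = z i := fun x => by
      rw [← hz, prefLe_eq_prefLe_iff, hz]
      exact forall₂_congr fun i _ => eq_comm
    simp only [hiff, ite_mul, zero_mul, ← sum_filter, sum_const, card_agree, mixC, nsmul_eq_mul,
      ← mul_sum]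
    push_cast
    field_simp
  · have hne : ∀ x, z ≠ prefLe x k := fun x hx => hz (hx ▸ prefLe_prefLe x k)
    simp [hne]

lemma condMI_prefLe (hsum : ∀ x k, ∑ m, Mc x k m = 1) (c : ℝ) :
    condMI (fun q : (Fin n → Bool) × T × (Fin n × (Fin n → Bool)) =>
        if q.2.2.2 = prefLe q.1 q.2.2.1 then c * Mc q.1 q.2.2.1 q.2.1 else 0)
      = c * ∑ k, ∑ x, (ent (mixC Mc x k k) - ent (Mc x k)) := by
  let r : (Fin n → Bool) × (Fin n × (Fin n → Bool)) → ℝ := fun xkz =>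
    if xkz.2.2 = prefLe xkz.1 xkz.2.1 then c else 0
  let Q : (Fin n → Bool) × (Fin n × (Fin n → Bool)) → T → ℝ := fun xkz => Mc xkz.1 xkz.2.1
  have hjoint : (fun q : (Fin n → Bool) × T × (Fin n × (Fin n → Bool)) =>
      if q.2.2.2 = prefLe q.1 q.2.2.1 then c * Mc q.1 q.2.2.1 q.2.1 else 0)
      = fun q => r (q.1, q.2.2) * Q (q.1, q.2.2) q.2.1 := by
    ext q; simp only [r, Q, ite_mul, zero_mul]
  rw [hjoint, condMI_eq_of_channel r Q (fun kz => mixC Mc kz.2 kz.1 kz.1) (fun _ => hsum _ _)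
    (fun _ => sum_mixC Mc hsum _ _ _) (fun m kz => sum_ite_prefLe_mul Mc c kz.1 kz.2 m)]
  simp only [r, Q, Fintype.sum_prod_type, sum_mul, ite_mul, zero_mul]
  rw [sum_congr rfl fun k _ => sum_comm]
  simp only [sum_ite_eq', mem_univ, if_true, mixC_prefLe, sum_sub_distrib]
  rw [sum_comm (s := univ) (t := univ) (f := fun x k => c * ent (Mc x k)), mul_sub]
  simp only [mul_sum]

section Flip

variable (hnn : ∀ x k m, 0 ≤ Mc x k m)
include hnn

lemma sum_hell_sq_flipAt_le {l l' : Fin n} (h : l ⋖ l') (k : Fin n) :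
    ∑ x, hell (mixC Mc x l' k) (mixC Mc (flipAt x l') l' k) ^ 2
      ≤ 2 * log 2 * (∑ x, ent (mixC Mc x l k) - ∑ x, ent (mixC Mc x l' k)) := by
  have hflip : ∑ x, ent (mixC Mc (flipAt x l') l' k) = ∑ x, ent (mixC Mc x l' k) :=
    Equiv.sum_comp (Function.Involutive.toPerm (flipAt · l') (flipAt_flipAt · l'))
      fun x => ent (mixC Mc x l' k)
  calc ∑ x, hell (mixC Mc x l' k) (mixC Mc (flipAt x l') l' k) ^ 2
      ≤ ∑ x, 2 * log 2 * (ent (mixC Mc x l k)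
          - (ent (mixC Mc x l' k) + ent (mixC Mc (flipAt x l') l' k)) / 2) := by
        gcongr with x
        rw [funext (mixC_eq_avg_of_covBy Mc h x k)]
        exact hell_sq_le_jensenShannon (mixC_nonneg Mc hnn _ _ _)
          (mixC_nonneg Mc hnn _ _ _)
    _ = 2 * log 2 * (∑ x, ent (mixC Mc x l k) - ∑ x, ent (mixC Mc x l' k)) := by
        rw [← mul_sum, sum_sub_distrib, ← sum_div, sum_add_distrib, hflip]
        ring

lemma sum_Ioi_sum_hell_sq_flipAt_le (j : Fin n) :
    ∑ l ∈ Ioi j, ∑ x, hell (mixC Mc x l j) (mixC Mc (flipAt x l) l j) ^ 2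
      ≤ 2 * log 2 * ∑ x, (ent (mixC Mc x j j) - ent (Mc x j)) := by
  have hn := j.pos
  let last : Fin n := ⟨n - 1, by omega⟩
  have hIoi : Ioi j = Ioc j last := by
    ext l
    simp only [mem_Ioi, mem_Ioc, iff_self_and, Fin.le_def, last]
    omega
  have hlast : ∀ x, mixC Mc x last j = Mc x j :=
    fun x => mixC_of_val_add_one_eq Mc (l := last) (by simp only [last]; omega) x j
  simp only [hIoi, sum_sub_distrib, ← hlast, mul_sub]
  exact sum_Ioc_le_sub_of_covBy (f := fun l => 2 * log 2 * ∑ x, ent (mixC Mc x l j))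
    (fun _ _ h => (sum_hell_sq_flipAt_le Mc hnn h j).trans_eq (mul_sub _ _ _))
    (show j ≤ last from Fin.le_def.2 (by simp only [last]; omega))

lemma sum_sum_filter_hell_sq_flipAt_le (t : ℕ) :
    ∑ x, ∑ j ∈ univ.filter (fun j : Fin n => (j : ℕ) < t),
        ∑ l ∈ univ.filter (fun l : Fin n => t ≤ (l : ℕ)),
          hell (mixC Mc x l j) (mixC Mc (flipAt x l) l j) ^ 2
      ≤ 2 * log 2 * ∑ k, ∑ x, (ent (mixC Mc x k k) - ent (Mc x k)) := by
  rw [sum_comm, mul_sum]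
  calc _ = ∑ j ∈ univ.filter (fun j : Fin n => (j : ℕ) < t),
        ∑ l ∈ univ.filter (fun l : Fin n => t ≤ (l : ℕ)),
          ∑ x, hell (mixC Mc x l j) (mixC Mc (flipAt x l) l j) ^ 2 :=
        sum_congr rfl fun _ _ => sum_comm
    _ ≤ ∑ j ∈ univ.filter (fun j : Fin n => (j : ℕ) < t),
        ∑ l ∈ Ioi j, ∑ x, hell (mixC Mc x l j) (mixC Mc (flipAt x l) l j) ^ 2 := by
        refine sum_le_sum fun j hj => sum_le_sum_of_subset_of_nonneg (fun l hl => ?_)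
          fun _ _ _ => by positivity
        simp only [mem_filter, mem_univ, true_and, mem_Ioi, Fin.lt_def] at hj hl ⊢
        omega
    _ ≤ ∑ j, ∑ l ∈ Ioi j, ∑ x, hell (mixC Mc x l j) (mixC Mc (flipAt x l) l j) ^ 2 :=
        sum_le_sum_of_subset_of_nonneg (filter_subset _ _) fun _ _ _ => by positivity
    _ ≤ _ := sum_le_sum fun j _ => sum_Ioi_sum_hell_sq_flipAt_le Mc hnn j

end Flip

end Mixture

theorem bit_flip_perturbation_general
    {n : ℕ} (hpos : 0 < n) {T : Type*} [Fintype T]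
    (Mc : (Fin n → Bool) → Fin n → T → ℝ)
    (hnn : ∀ x k m, 0 ≤ Mc x k m)
    (hsum : ∀ x k, ∑ m, Mc x k m = 1)
    (d₁ : ℝ)
    (hICA : condMI (fun q : (Fin n → Bool) × T × (Fin n × (Fin n → Bool)) =>
        if q.2.2.2 = prefLe q.1 q.2.2.1 then
          (1 / 2 ^ n) * (1 / (n : ℝ)) * Mc q.1 q.2.2.1 q.2.1
        else 0) ≤ d₁ * n) :
    (1 / 2 ^ n) * (2 / (n : ℝ)) ^ 2 *
        ∑ x : Fin n → Bool,
          ∑ j ∈ Finset.univ.filter (fun j : Fin n => (j : ℕ) < n / 2),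
            ∑ l ∈ Finset.univ.filter (fun l : Fin n => n / 2 ≤ (l : ℕ)),
              hell (mixC Mc x l j) (mixC Mc (flipAt x l) l j) ^ 2
      ≤ 16 * (Real.log 2 / 2) * d₁ := by
  have hn : (0 : ℝ) < n := by exact_mod_cast hpos
  rw [condMI_prefLe Mc hsum] at hICA
  set S := ∑ k, ∑ x, (ent (mixC Mc x k k) - ent (Mc x k))
  calc _ ≤ 1 / 2 ^ n * (2 / (n : ℝ)) ^ 2 * (2 * log 2 * S) := by
        gcongr
        exact sum_sum_filter_hell_sq_flipAt_le Mc hnn (n / 2)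
    _ = 8 * log 2 / n * (1 / 2 ^ n * (1 / (n : ℝ)) * S) := by field_simp; ring
    _ ≤ 8 * log 2 / n * (d₁ * n) := by gcongr
    _ = 16 * (log 2 / 2) * d₁ := by field_simp; ring

/-- Lemma `thm-flip`: with `X` uniform on `{0,1}^n`, `K` uniform on `[n]`
independent of `X`, `M⁰` having conditional law `Mc x k` given `(X,K) = (x,k)`, and
`I(X : M⁰ | K, X[1,K]) ≤ d₁·n`, for `J` uniform on `[n/2]` and `L` uniform on
`{n/2+1,…,n}` (0-based `j, l : Fin n`), flipping the `l`-th bit of Alice's prefix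
perturbs the suffix-mixture transcript distribution by at most `16κd₁` on average:
`E_{(z,j,l)} h(M(z·X[l+1,n]; z[1,j]), M(z[1,l−1]·z̄_l·X[l+1,n]; z[1,j]))² ≤ 16κd₁`. -/
theorem bit_flip_perturbation
    {n : ℕ} (hn : Even n) (hpos : 0 < n) {T : Type*} [Fintype T]
    (Mc : (Fin n → Bool) → Fin n → T → ℝ)
    (hnn : ∀ x k m, 0 ≤ Mc x k m)
    (hsum : ∀ x k, ∑ m, Mc x k m = 1)
    (d₁ : ℝ)
    (hICA : condMI (fun q : (Fin n → Bool) × T × (Fin n × (Fin n → Bool)) =>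
        if q.2.2.2 = prefLe q.1 q.2.2.1 then
          (1 / 2 ^ n) * (1 / (n : ℝ)) * Mc q.1 q.2.2.1 q.2.1
        else 0) ≤ d₁ * n) :
    (1 / 2 ^ n) * (2 / (n : ℝ)) ^ 2 *
        ∑ x : Fin n → Bool,
          ∑ j ∈ Finset.univ.filter (fun j : Fin n => (j : ℕ) < n / 2),
            ∑ l ∈ Finset.univ.filter (fun l : Fin n => n / 2 ≤ (l : ℕ)),
              hell (mixC Mc x l j) (mixC Mc (flipAt x l) l j) ^ 2
      ≤ 16 * (Real.log 2 / 2) * d₁ :=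
  bit_flip_perturbation_general hpos Mc hnn hsum d₁ hICA
end

section
/- Let T be a finite set, 𝒳 and 𝒴 arbitrary sets, and for each (x,y) ∈ 𝒳 × 𝒴 let M(x,y) be a probability distribution on T such that M(x,y)(m) = α(m,x)·β(m,y) for all m ∈ T, for some nonnegative functions α on T × 𝒳 and β on T × 𝒴 (such a factorization holds for the message-transcript distribution of any two-party private-coin communication protocol). Then for all x, u ∈ 𝒳 and all y, v ∈ 𝒴, h(M(x,y), M(u,v)) = h(M(x,v), M(u,y)). -/
/-!
For probability distributions `h(P,Q)² = 1 - ∑ √(P m) √(Q m)`, and when `P = M(x,y)`,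
`Q = M(u,v)` the summand `√(α(m,x) α(m,u) β(m,y) β(m,v))` is unchanged by swapping `y` and `v`.
-/

open Finset

noncomputable def bhattacharyya {S : Type*} [Fintype S] (p q : S → ℝ) : ℝ :=
  ∑ s, Real.sqrt (p s) * Real.sqrt (q s)

theorem hell_eq_sqrt_one_sub_bhattacharyya {S : Type*} [Fintype S] {p q : S → ℝ}
    (hp : ∀ s, 0 ≤ p s) (hq : ∀ s, 0 ≤ q s) (hp1 : ∑ s, p s = 1) (hq1 : ∑ s, q s = 1) :
    hell p q = Real.sqrt (1 - bhattacharyya p q) := by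
  have hsq : ∀ s, (Real.sqrt (p s) - Real.sqrt (q s)) ^ 2
      = p s + q s - 2 * (Real.sqrt (p s) * Real.sqrt (q s)) := fun s => by
    rw [sub_sq, Real.sq_sqrt (hp s), Real.sq_sqrt (hq s)]
    ring
  unfold hell bhattacharyya
  rw [Finset.sum_congr rfl fun s _ => hsq s, Finset.sum_sub_distrib, Finset.sum_add_distrib,
    hp1, hq1, ← Finset.mul_sum]
  ring_nf

theorem bhattacharyya_mul_swap {S : Type*} [Fintype S] {a b : S → ℝ} (c d : S → ℝ)
    (ha : ∀ s, 0 ≤ a s) (hb : ∀ s, 0 ≤ b s) :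
    bhattacharyya (fun s => a s * c s) (fun s => b s * d s)
      = bhattacharyya (fun s => a s * d s) (fun s => b s * c s) := by
  refine Finset.sum_congr rfl fun s _ => ?_
  simp only [Real.sqrt_mul (ha s), Real.sqrt_mul (hb s)]
  ring

/-- Cut-and-Paste: if the transcript distributions
`M(x,y)(m) = α(m,x)·β(m,y)` factorize as in a two-party private-coin protocol,
then `h(M(x,y), M(u,v)) = h(M(x,v), M(u,y))`. -/
theorem cut_and_paste {T : Type*} [Fintype T] {𝒳 𝒴 : Type*}
    (α : T → 𝒳 → ℝ) (β : T → 𝒴 → ℝ)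
    (hα : ∀ m x, 0 ≤ α m x) (hβ : ∀ m y, 0 ≤ β m y)
    (hsum : ∀ x y, ∑ m, α m x * β m y = 1)
    (x u : 𝒳) (y v : 𝒴) :
    hell (fun m => α m x * β m y) (fun m => α m u * β m v)
      = hell (fun m => α m x * β m v) (fun m => α m u * β m y) := by
  have hM : ∀ x y m, 0 ≤ α m x * β m y := fun x y m => mul_nonneg (hα m x) (hβ m y)
  rw [hell_eq_sqrt_one_sub_bhattacharyya (hM x y) (hM u v) (hsum x y) (hsum u v),
    hell_eq_sqrt_one_sub_bhattacharyya (hM x v) (hM u y) (hsum x v) (hsum u y),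
    bhattacharyya_mul_swap (fun m => β m y) (fun m => β m v) (fun m => hα m x) (fun m => hα m u)]
end

section
/- Let (A, B) be jointly distributed random variables taking values in finite sets. For b in the support of B, let A|b denote the conditional distribution of A given B = b, and let A also denote the marginal distribution of A. Then E_{b←B} h(A|b, A)² ≤ κ · I(A : B). -/
/-!
Pointwise, `log t ≤ t - 1` applied at `t = √(y/x)` gives
`(√x - √y)² + (x - y) ≤ x log (x / y)`; summing over a pair of distributions yields
`h(P, Q)² ≤ D(P ‖ Q) / 2` with the divergence in nats. Averaging this over `b` for
`P = A|b`, `Q = A` turns the right-hand side into `I(A:B)` measured in nats, i.e. `ln 2 · I(A:B)`.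
-/

open Finset

/-- Shannon mutual information `I(A:B)` of a joint distribution on `A × B`. -/
noncomputable def mutInfo {A B : Type*} [Fintype A] [Fintype B] (p : A × B → ℝ) : ℝ :=
  ent (fun a => ∑ b, p (a, b)) + ent (fun b => ∑ a, p (a, b)) - ent p

open Real

lemma sq_sqrt_sub_sqrt_add_sub_le_mul_log_div {x y : ℝ} (hx : 0 ≤ x) (hy : 0 ≤ y)
    (hxy : y = 0 → x = 0) :
    (√x - √y) ^ 2 + (x - y) ≤ x * log (x / y) := by
  rcases hx.eq_or_lt with rfl | hx
  · simp [sq_sqrt hy]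
  have hy : 0 < y := hy.lt_of_ne fun h => hx.ne' (hxy h.symm)
  have hsx : 0 < √x := sqrt_pos.2 hx
  have hsy : 0 < √y := sqrt_pos.2 hy
  have hlog : log (x / y) = -2 * log (√y / √x) := by
    rw [log_div hsy.ne' hsx.ne', log_sqrt hy.le, log_sqrt hx.le, log_div hx.ne' hy.ne']
    ring
  have hmul : x * (√y / √x) = √x * √y := by
    field_simp
    rw [sq_sqrt hx.le]
  have key : x * log (√y / √x) ≤ √x * √y - x := by
    have := mul_le_mul_of_nonneg_left (log_le_sub_one_of_pos (div_pos hsy hsx)) hx.le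
    rwa [mul_sub, hmul, mul_one] at this
  nlinarith [sq_sqrt hx.le, sq_sqrt hy.le]

lemma hell_sq_le_half_sum_mul_log_div {S : Type*} [Fintype S] {p q : S → ℝ}
    (hp : ∀ s, 0 ≤ p s) (hq : ∀ s, 0 ≤ q s) (hpq : ∑ s, p s = ∑ s, q s)
    (hac : ∀ s, q s = 0 → p s = 0) :
    hell p q ^ 2 ≤ 1 / 2 * ∑ s, p s * log (p s / q s) := by
  have key : ∑ s, ((√(p s) - √(q s)) ^ 2 + (p s - q s)) ≤ ∑ s, p s * log (p s / q s) :=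
    sum_le_sum fun s _ => sq_sqrt_sub_sqrt_add_sub_le_mul_log_div (hp s) (hq s) (hac s)
  rw [sum_add_distrib, sum_sub_distrib, hpq, sub_self, add_zero] at key
  rw [hell, sq_sqrt (by positivity)]
  linarith

lemma sum_mul_hell_div_sum_sq_le {S : Type*} [Fintype S] {u r : S → ℝ}
    (hu : ∀ s, 0 ≤ u s) (hr : ∀ s, 0 ≤ r s) (hr1 : ∑ s, r s = 1)
    (hac : ∀ s, r s = 0 → u s = 0) :
    (∑ s, u s) * hell (fun s => u s / ∑ s', u s') r ^ 2
      ≤ 1 / 2 * ∑ s, u s * log (u s / ((∑ s', u s') * r s)) := by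
  set c := ∑ s', u s'
  rcases (sum_nonneg fun s _ => hu s : 0 ≤ c).eq_or_lt with hc | hc
  · -- both sides vanish, the right one because `u s / 0 = 0`
    rw [show c = 0 from hc.symm]
    simp
  have hkl := hell_sq_le_half_sum_mul_log_div (p := fun s => u s / c)
    (fun s => div_nonneg (hu s) hc.le) hr
    (by rw [← sum_div, div_self hc.ne', hr1]) (fun s hs => by simp [hac s hs])
  calc c * hell (fun s => u s / c) r ^ 2
      ≤ c * (1 / 2 * ∑ s, u s / c * log (u s / c / r s)) :=
        mul_le_mul_of_nonneg_left hkl hc.le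
    _ = 1 / 2 * ∑ s, u s * log (u s / (c * r s)) := by
        rw [mul_left_comm, mul_sum]
        congr 1
        refine sum_congr rfl fun s _ => ?_
        rw [div_div, ← mul_assoc, mul_div_cancel₀ (u s) hc.ne']

lemma mul_log_div_mul_eq {x y z : ℝ} (hx : 0 ≤ x) (hxy : x ≤ y) (hxz : x ≤ z) :
    x * log (x / (y * z)) = x * log x - x * log y - x * log z := by
  rcases hx.eq_or_lt with rfl | hx
  · simp
  rw [log_div hx.ne' (by nlinarith), log_mul (by linarith) (by linarith)]
  ring

lemma log_two_mul_ent {S : Type*} [Fintype S] (f : S → ℝ) :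
    log 2 * ent f = -∑ s, f s * log (f s) := by
  rw [ent, mul_neg, mul_sum]
  congr 1
  refine sum_congr rfl fun s _ => ?_
  rw [logb]
  field_simp

lemma log_two_mul_mutInfo {A B : Type*} [Fintype A] [Fintype B] {p : A × B → ℝ}
    (hp : ∀ ab, 0 ≤ p ab) :
    log 2 * mutInfo p
      = ∑ b, ∑ a, p (a, b) * log (p (a, b) / ((∑ a', p (a', b)) * ∑ b', p (a, b'))) := by
  have hsplit : ∀ a b, p (a, b) * log (p (a, b) / ((∑ a', p (a', b)) * ∑ b', p (a, b')))
      = p (a, b) * log (p (a, b)) - p (a, b) * log (∑ a', p (a', b))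
        - p (a, b) * log (∑ b', p (a, b')) := fun a b =>
    mul_log_div_mul_eq (hp _) (single_le_sum (fun a' _ => hp (a', b)) (mem_univ a))
      (single_le_sum (fun b' _ => hp (a, b')) (mem_univ b))
  have hrow : ∑ b, ∑ a, p (a, b) * log (∑ b', p (a, b'))
      = ∑ a, (∑ b, p (a, b)) * log (∑ b', p (a, b')) := by
    rw [sum_comm]
    simp_rw [← sum_mul]
  simp_rw [hsplit, sum_sub_distrib, ← sum_mul]
  rw [hrow, mutInfo, mul_sub, mul_add, log_two_mul_ent, log_two_mul_ent, log_two_mul_ent,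
    Fintype.sum_prod_type, sum_comm (γ := A)]
  ring

/-- Average encoding theorem: for jointly distributed finite random
variables `(A,B)` with joint pmf `p`,
`E_{b←B} h(A|b, A)² ≤ κ · I(A:B)` with `κ = (ln 2)/2`. -/
theorem average_encoding {A B : Type*} [Fintype A] [Fintype B]
    (p : A × B → ℝ) (hnn : ∀ ab, 0 ≤ p ab) (hsum : ∑ ab, p ab = 1) :
    ∑ b, (∑ a, p (a, b)) *
        hell (fun a => p (a, b) / ∑ a', p (a', b)) (fun a => ∑ b', p (a, b')) ^ 2
      ≤ (Real.log 2 / 2) * mutInfo p := by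
  have hmarg : ∑ a, ∑ b, p (a, b) = 1 := by rwa [← Fintype.sum_prod_type]
  have hac : ∀ a b, ∑ b', p (a, b') = 0 → p (a, b) = 0 := fun a b h =>
    le_antisymm (h ▸ single_le_sum (fun b' _ => hnn (a, b')) (mem_univ b)) (hnn _)
  calc _ ≤ ∑ b, 1 / 2 *
          ∑ a, p (a, b) * log (p (a, b) / ((∑ a', p (a', b)) * ∑ b', p (a, b'))) :=
        sum_le_sum fun b _ => sum_mul_hell_div_sum_sq_le (fun a => hnn _)
          (fun a => sum_nonneg fun b' _ => hnn _) hmarg (hac · b)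
    _ = (Real.log 2 / 2) * mutInfo p := by
        rw [← mul_sum, ← log_two_mul_mutInfo hnn]
        ring
end

section
/- Let (Z, M) be jointly distributed random variables where Z is uniform on {0,1} and M takes values in a finite set. Let M|Z=0 and M|Z=1 denote the conditional distributions of M given Z = 0 and Z = 1, respectively. Then h(M|Z=0, M|Z=1)² ≤ 4 κ · I(Z : M). -/
/-!
With `m = (p0 + p1) / 2`, the mutual information of a uniform bit `Z` with `M` is the
Jensen–Shannon divergence: `2 ln 2 · I(Z:M) = ∑ₛ (p0 ln (p0/m) + p1 ln (p1/m))`. Each summand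
dominates `(√p0 - √p1)² / 2`: from `ln t ≤ t - 1` at `t = √(m/x)` one gets
`x ln (x/m) ≥ 2 (x - √(x m))`, and what is left over is `(2√m - √p0 - √p1)² / 2 ≥ 0`.
-/

open Finset

open Real

lemma two_mul_sub_sqrt_mul_sqrt_le_mul_log_sub {x y : ℝ} (hx : 0 ≤ x) (hy : 0 < y) :
    2 * (x - √x * √y) ≤ x * (log x - log y) := by
  rcases hx.eq_or_lt with rfl | hx
  · simp
  have hlog : log (√y / √x) ≤ √y / √x - 1 := log_le_sub_one_of_pos (by positivity)
  rw [log_div (by positivity) (by positivity), log_sqrt hx.le, log_sqrt hy.le] at hlog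
  have hsx : √x ^ 2 = x := sq_sqrt hx.le
  have hmul : x * (√y / √x) = √x * √y := by
    field_simp
    rw [hsx]
  nlinarith

lemma half_mul_sq_sqrt_sub_sqrt_le {x y : ℝ} (hx : 0 ≤ x) (hy : 0 ≤ y) :
    (1 / 2) * (√x - √y) ^ 2
      ≤ 2 * negMulLog ((x + y) / 2) - negMulLog x - negMulLog y := by
  set m := (x + y) / 2 with hm_def
  rcases (show 0 ≤ m by positivity).eq_or_lt with hm | hm
  · obtain ⟨rfl, rfl⟩ : x = 0 ∧ y = 0 := ⟨by linarith, by linarith⟩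
    norm_num [m]
  have kx := two_mul_sub_sqrt_mul_sqrt_le_mul_log_sub hx hm
  have ky := two_mul_sub_sqrt_mul_sqrt_le_mul_log_sub hy hm
  have hgap : (1 / 2) * (√x - √y) ^ 2 + (1 / 2) * (2 * √m - √x - √y) ^ 2
      = 2 * (x - √x * √m) + 2 * (y - √y * √m) := by
    have hm2 : √m ^ 2 = m := sq_sqrt hm.le
    linear_combination sq_sqrt hx + sq_sqrt hy + 2 * hm2 + 2 * hm_def
  have hrhs : 2 * negMulLog m - negMulLog x - negMulLog y
      = x * (log x - log m) + y * (log y - log m) := by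
    simp only [negMulLog, hm_def]; ring
  nlinarith [sq_nonneg (2 * √m - √x - √y)]

lemma ent_eq_sum_negMulLog_div {S : Type*} [Fintype S] (p : S → ℝ) :
    ent p = (∑ s, negMulLog (p s)) / log 2 := by
  simp only [ent, negMulLog, logb, sum_div]
  rw [← sum_neg_distrib]
  congr 1; ext s; ring

lemma sum_negMulLog_const_mul {S : Type*} [Fintype S] (c : ℝ) {p : S → ℝ}
    (hp : ∑ s, p s = 1) :
    ∑ s, negMulLog (c * p s) = negMulLog c + c * ∑ s, negMulLog (p s) := by
  simp only [negMulLog_mul, sum_add_distrib, ← sum_mul, ← mul_sum, hp, one_mul]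

lemma negMulLog_half : negMulLog (1 / 2) = log 2 / 2 := by
  simp [negMulLog, log_inv]; ring

section UniformBit

variable {S : Type*}

noncomputable def uniformBitJoint (p0 p1 : S → ℝ) : Bool × S → ℝ :=
  fun zm => (1 / 2) * if zm.1 then p1 zm.2 else p0 zm.2

lemma sum_uniformBitJoint_fst [Fintype S] {p0 p1 : S → ℝ} (h0sum : ∑ s, p0 s = 1)
    (h1sum : ∑ s, p1 s = 1) :
    (fun z => ∑ s, uniformBitJoint p0 p1 (z, s)) = fun _ => 1 / 2 := by
  funext z
  cases z <;> simp [uniformBitJoint, ← mul_sum, h0sum, h1sum]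

lemma sum_uniformBitJoint_snd (p0 p1 : S → ℝ) :
    (fun s => ∑ z, uniformBitJoint p0 p1 (z, s)) = fun s => (p0 s + p1 s) / 2 := by
  funext s
  simp only [uniformBitJoint, Fintype.sum_bool, if_true, Bool.false_eq_true, if_false]
  ring

lemma sum_negMulLog_uniformBitJoint [Fintype S] {p0 p1 : S → ℝ} (h0sum : ∑ s, p0 s = 1)
    (h1sum : ∑ s, p1 s = 1) :
    ∑ zm, negMulLog (uniformBitJoint p0 p1 zm)
      = log 2 + (1 / 2) * (∑ s, negMulLog (p0 s) + ∑ s, negMulLog (p1 s)) := by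
  simp only [uniformBitJoint, Fintype.sum_prod_type, Fintype.sum_bool, if_true,
    Bool.false_eq_true, if_false, sum_negMulLog_const_mul _ h0sum,
    sum_negMulLog_const_mul _ h1sum, negMulLog_half]
  ring

lemma mutInfo_uniformBitJoint [Fintype S] {p0 p1 : S → ℝ} (h0sum : ∑ s, p0 s = 1)
    (h1sum : ∑ s, p1 s = 1) :
    mutInfo (uniformBitJoint p0 p1)
      = (∑ s, (negMulLog ((p0 s + p1 s) / 2) - (negMulLog (p0 s) + negMulLog (p1 s)) / 2))
          / log 2 := by
  rw [mutInfo, sum_uniformBitJoint_fst h0sum h1sum, sum_uniformBitJoint_snd,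
    ent_eq_sum_negMulLog_div, ent_eq_sum_negMulLog_div, ent_eq_sum_negMulLog_div,
    sum_negMulLog_uniformBitJoint h0sum h1sum, Fintype.sum_bool, negMulLog_half,
    sum_sub_distrib, ← sum_div, sum_add_distrib]
  ring

end UniformBit

/-- for `Z` uniform on `{0,1}` jointly distributed with a finite
random variable `M` whose conditional laws given `Z = 0` and `Z = 1` are `p0`
and `p1`, one has `h(M|Z=0, M|Z=1)² ≤ 4κ · I(Z:M)` with `κ = (ln 2)/2`. -/
theorem hellinger_sq_le_mutInfo_of_uniform_bit {S : Type*} [Fintype S]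
    (p0 p1 : S → ℝ)
    (h0nn : ∀ s, 0 ≤ p0 s) (h1nn : ∀ s, 0 ≤ p1 s)
    (h0sum : ∑ s, p0 s = 1) (h1sum : ∑ s, p1 s = 1) :
    hell p0 p1 ^ 2
      ≤ 4 * (Real.log 2 / 2) *
          mutInfo (fun zm : Bool × S => (1/2) * (if zm.1 then p1 zm.2 else p0 zm.2)) := by
  have hlog2 : 0 < log 2 := log_pos one_lt_two
  calc hell p0 p1 ^ 2 = ∑ s, (1 / 2) * (√(p0 s) - √(p1 s)) ^ 2 := by
        rw [hell, sq_sqrt (by positivity), mul_sum]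
    _ ≤ ∑ s, (2 * negMulLog ((p0 s + p1 s) / 2) - negMulLog (p0 s) - negMulLog (p1 s)) :=
        sum_le_sum fun s _ => half_mul_sq_sqrt_sub_sqrt_le (h0nn s) (h1nn s)
    _ = 4 * (log 2 / 2) * mutInfo (uniformBitJoint p0 p1) := by
        rw [mutInfo_uniformBitJoint h0sum h1sum, sum_div, mul_sum]
        refine sum_congr rfl fun s _ => ?_
        field_simp
        ring
end
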